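/- arXiv:0802.1082 — 5 statements merged into one kernel-verified Lean document; each statement's English description precedes it below -/
import Mathlib

section
/- If r is a vector of norm 3 in an E-lattice L satisfying ⟨L,L⟩ ⊆ θE, then the map x ↦ x + (ω-1)·(⟨x,r⟩/3)·r is an isometry of L of order 3 fixing r^⊥ pointwise and multiplying r by ω. -/
/-!
The map is the complex reflection `x ↦ x + (ζ - 1) (⟨x,r⟩/⟨r,r⟩) r` with `ζ = ω`. Any such map
fixes `r^⊥`, multiplies `r` by `ζ`, and its `n`-th iterate is the reflection with `ζ ^ n`; it is an
isometry as soon as `ζ̄ ζ = 1`, which together with `ω ^ 3 = 1` gives everything but integrality.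
Integrality comes from `(ω - 1) θ = 3 ω²`: when `⟨x,r⟩ = θ e`, the coefficient of `r` is `ω² e`.
-/

noncomputable section

def ω : ℂ := -1/2 + (Real.sqrt 3 / 2) * Complex.I
def θ : ℂ := ω - (starRingEnd ℂ) ω
def Eis : Subring ℂ := Subring.closure {ω}

section ComplexReflection

variable {K V : Type*} [Field K] [AddCommGroup V] [Module K V]

def complexReflection (B : V →ₗ[K] V → K) (r : V) (ζ : K) (x : V) : V :=
  x + ((ζ - 1) * (B x r / B r r)) • r

variable (B : V →ₗ[K] V → K) (r : V) (ζ : K)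

lemma complexReflection_of_apply_eq_zero {x : V} (hx : B x r = 0) :
    complexReflection B r ζ x = x := by
  simp [complexReflection, hx]

lemma complexReflection_self (hr : B r r ≠ 0) : complexReflection B r ζ r = ζ • r := by
  rw [complexReflection, div_self hr, mul_one, sub_smul, one_smul, add_sub_cancel]

lemma iterate_complexReflection (hr : B r r ≠ 0) (n : ℕ) (x : V) :
    (complexReflection B r ζ)^[n] x = x + ((ζ ^ n - 1) * (B x r / B r r)) • r := by
  induction n with
  | zero => simp
  | succ n ih =>
    rw [Function.iterate_succ_apply', ih, complexReflection, add_assoc, ← add_smul]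
    simp only [map_add, map_smul, Pi.add_apply, Pi.smul_apply, smul_eq_mul]
    congr 2
    field_simp
    ring

lemma iterate_complexReflection_eq_id {n : ℕ} (hr : B r r ≠ 0) (hζ : ζ ^ n = 1) :
    (complexReflection B r ζ)^[n] = id := by
  ext x
  simp [iterate_complexReflection B r ζ hr, hζ]

lemma complexReflection_ne_id (hr : B r r ≠ 0) (hζ : ζ ≠ 1) : complexReflection B r ζ ≠ id := by
  intro h
  have hr0 : r ≠ 0 := by
    rintro rfl
    simp at hr
  have hζr : ζ • r = (1 : K) • r := by
    rw [← complexReflection_self B r ζ hr, h, id, one_smul]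
  exact hζ (smul_left_injective K hr0 hζr)

lemma apply_add_smul_right_of_conj_symm [StarRing K]
    (hB : ∀ x y, B y x = starRingEnd K (B x y)) (x y z : V) (c : K) :
    B x (y + c • z) = B x y + starRingEnd K c * B x z := by
  rw [hB, map_add, map_smul, Pi.add_apply, Pi.smul_apply, smul_eq_mul, map_add, map_mul, ← hB,
    ← hB]

lemma complexReflection_isometry [StarRing K]
    (hB : ∀ x y, B y x = starRingEnd K (B x y)) (hr : B r r ≠ 0)
    (hζ : starRingEnd K ζ * ζ = 1) (x y : V) :
    B (complexReflection B r ζ x) (complexReflection B r ζ y) = B x y := by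
  have hrr : starRingEnd K (B r r) = B r r := (hB r r).symm
  have hry : B r y = starRingEnd K (B y r) := hB y r
  simp only [complexReflection, apply_add_smul_right_of_conj_symm B hB, map_add, map_smul,
    Pi.add_apply, Pi.smul_apply, smul_eq_mul, map_mul, map_div₀, map_sub, map_one, hrr, hry]
  field_simp
  linear_combination (B x r * starRingEnd K (B y r)) * hζ

end ComplexReflection

lemma smul_mem_of_mem_subringClosure {R M : Type*} [Ring R] [AddCommGroup M] [Module R M]
    (L : AddSubgroup M) {s : Set R} (hs : ∀ a ∈ s, ∀ x ∈ L, a • x ∈ L)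
    {e : R} (he : e ∈ Subring.closure s) : ∀ x ∈ L, e • x ∈ L := by
  induction he using Subring.closure_induction with
  | mem a ha => exact hs a ha
  | one => simp
  | zero => simp
  | add a b _ _ iha ihb =>
    intro x hx
    rw [add_smul]
    exact L.add_mem (iha x hx) (ihb x hx)
  | neg a _ iha =>
    intro x hx
    rw [neg_smul]
    exact L.neg_mem (iha x hx)
  | mul a b _ _ iha ihb =>
    intro x hx
    rw [mul_smul]
    exact iha _ (ihb x hx)

lemma ω_mul_ω : ω * ω = -ω - 1 := by
  have hsq : (Real.sqrt 3 : ℂ) * Real.sqrt 3 = 3 := by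
    norm_cast
    rw [Real.mul_self_sqrt (by norm_num)]
  unfold ω
  linear_combination (Complex.I ^ 2 / 4) * hsq + (3 / 4 : ℂ) * Complex.I_sq

lemma conj_ω : starRingEnd ℂ ω = -1 - ω := by
  simp only [ω, map_add, map_mul, map_div₀, map_neg, map_one, map_ofNat, Complex.conj_I,
    Complex.conj_ofReal]
  ring

lemma conj_ω_mul_ω : starRingEnd ℂ ω * ω = 1 := by
  rw [conj_ω]
  linear_combination -ω_mul_ω

lemma ω_pow_three : ω ^ 3 = 1 := by
  linear_combination (ω - 1) * ω_mul_ω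

lemma ω_ne_one : ω ≠ 1 := by
  intro h
  have him : ω.im = Real.sqrt 3 / 2 := by simp [ω]
  rw [h, Complex.one_im] at him
  have : 0 < Real.sqrt 3 := Real.sqrt_pos.mpr (by norm_num)
  linarith

lemma ω_sub_one_mul_θ : (ω - 1) * θ = 3 * (ω * ω) := by
  rw [θ, conj_ω]
  linear_combination -ω_mul_ω

lemma ω_sub_one_mul_θ_mul_div_three_mem_Eis {e : ℂ} (he : e ∈ Eis) :
    (ω - 1) * (θ * e / 3) ∈ Eis := by
  have hω : ω ∈ Eis := Subring.subset_closure rfl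
  have h : (ω - 1) * (θ * e / 3) = ω * ω * e := by
    linear_combination (e / 3) * ω_sub_one_mul_θ
  rw [h]
  exact mul_mem (mul_mem hω hω) he

/-- If `r` is a norm-3 vector in an Eisenstein lattice `L` with `⟨L,L⟩ ⊆ θ·Eis`,
then `x ↦ x + (ω-1)(⟨x,r⟩/3)r` is an isometry of `L` of order 3 fixing `r^⊥`
pointwise and multiplying `r` by `ω`. -/
theorem stmt2 {V : Type*} [AddCommGroup V] [Module ℂ V]
    (B : V → V → ℂ)
    (hBadd : ∀ x y z : V, B (x + y) z = B x z + B y z)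
    (hBsmul : ∀ (c : ℂ) (x y : V), B (c • x) y = c * B x y)
    (hherm : ∀ x y : V, B y x = (starRingEnd ℂ) (B x y))
    (L : Set V)
    (hL0 : (0 : V) ∈ L)
    (hLadd : ∀ x ∈ L, ∀ y ∈ L, x + y ∈ L)
    (hLneg : ∀ x ∈ L, -x ∈ L)
    (hLω : ∀ x ∈ L, ω • x ∈ L)
    (hdiv : ∀ x ∈ L, ∀ y ∈ L, ∃ e ∈ Eis, B x y = θ * e)
    (r : V) (hr : r ∈ L) (hr3 : B r r = 3)
    (f : V → V) (hf : ∀ x, f x = x + ((ω - 1) * (B x r / 3)) • r) :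
    (∀ x ∈ L, f x ∈ L) ∧
    (∀ x y : V, B (f x) (f y) = B x y) ∧
    (∀ x, f (f (f x)) = x) ∧
    f ≠ id ∧
    (∀ x, B x r = 0 → f x = x) ∧
    f r = ω • r := by
  let Bₗ : V →ₗ[ℂ] V → ℂ :=
    { toFun := B, map_add' := fun x y => funext (hBadd x y),
      map_smul' := fun c x => funext (hBsmul c x) }
  have hrr : Bₗ r r ≠ 0 := by
    change B r r ≠ 0
    rw [hr3]
    norm_num
  obtain rfl : f = complexReflection Bₗ r ω := funext fun x => by
    rw [hf, complexReflection]
    change _ = x + ((ω - 1) * (B x r / B r r)) • r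
    rw [hr3]
  let Λ : AddSubgroup V :=
    { carrier := L, zero_mem' := hL0, add_mem' := fun {x y} hx hy => hLadd x hx y hy,
      neg_mem' := fun {x} hx => hLneg x hx }
  refine ⟨fun x hx => ?_, complexReflection_isometry Bₗ r ω hherm hrr conj_ω_mul_ω,
    fun x => congrFun (iterate_complexReflection_eq_id Bₗ r ω hrr ω_pow_three) x,
    complexReflection_ne_id Bₗ r ω hrr ω_ne_one,
    fun x => complexReflection_of_apply_eq_zero Bₗ r ω, complexReflection_self Bₗ r ω hrr⟩
  obtain ⟨e, he, hxr⟩ := hdiv x hx r hr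
  change x ∈ Λ at hx
  change complexReflection Bₗ r ω x ∈ Λ
  have hcoeff : (ω - 1) * (B x r / B r r) ∈ Eis := by
    rw [hxr, hr3]
    exact ω_sub_one_mul_θ_mul_div_three_mem_Eis he
  exact Λ.add_mem hx (smul_mem_of_mem_subringClosure Λ (by rintro _ rfl; exact hLω) hcoeff r hr)
end
end

section
/- Let r, r' be nonproportional vectors of norm 3 in a Hermitian ℂ-vector space, and let R, R' be the ω-reflections in r and r' (x ↦ x + (ω-1)⟨x,r⟩r/3, etc.). Then R and R' satisfy the braid relation RR'R = R'RR' if and only if |⟨r,r'⟩|² = 3, and they commute if and only if ⟨r,r'⟩ = 0. -/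
/-!
Both defects `RR'R - R'RR'` and `RR' - R'R` have image in the span of `r` and `r'`, and a direct
computation (using `ω² + ω + 1 = 0` for the braid defect) gives
`RR'R - R'RR' = (ω - 1)ω/3 · (1 - |⟨r,r'⟩|²/3) · (⟨x,r⟩ r - ⟨x,r'⟩ r')` and
`RR' - R'R = (ω - 1)²/9 · (⟨r,r'⟩⟨x,r'⟩ r - ⟨r',r⟩⟨x,r⟩ r')`.
Evaluating at `x = r` and using the linear independence of `r, r'` reads off the scalar
factors `1 - |⟨r,r'⟩|²/3` and `⟨r',r⟩` respectively.
-/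

noncomputable section

theorem omega_sq_add_omega_add_one : ω ^ 2 + ω + 1 = 0 := by
  have hs : ((Real.sqrt 3 : ℝ) : ℂ) ^ 2 = 3 := by
    norm_cast
    exact Real.sq_sqrt (by norm_num)
  simp only [ω]
  linear_combination (3 / 4) * Complex.I_sq + (Complex.I ^ 2 / 4) * hs

theorem omega_ne_zero : ω ≠ 0 := by
  simp only [ω, ne_eq, Complex.ext_iff]
  norm_num

theorem omega_sub_one_ne_zero : ω - 1 ≠ 0 := by
  simp only [ω, ne_eq, sub_eq_zero, Complex.ext_iff]
  norm_num

theorem LinearIndependent.pair_smul_sub_smul_eq_zero_iff {K M : Type*} [Ring K]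
    [AddCommGroup M] [Module K M] {x y : M} (h : LinearIndependent K ![x, y]) (s t : K) :
    s • x - t • y = 0 ↔ s = 0 ∧ t = 0 := by
  refine ⟨fun hst => ?_, fun ⟨hs, ht⟩ => by simp [hs, ht]⟩
  rw [sub_eq_add_neg, ← neg_smul] at hst
  simpa using LinearIndependent.pair_iff.1 h s (-t) hst

section

variable {V : Type*} [NormedAddCommGroup V] [InnerProductSpace ℂ V]

/-- The paper's `⟨x, r⟩`, linear in `x`, is `inner ℂ r x` in Mathlib's convention. -/
def omegaReflection (r x : V) : V := x + ((ω - 1) * (inner ℂ r x / 3)) • r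

theorem omegaReflection_braid_sub {r r' : V} (h3 : inner ℂ r r = (3 : ℂ))
    (h3' : inner ℂ r' r' = (3 : ℂ)) (x : V) :
    omegaReflection r (omegaReflection r' (omegaReflection r x)) -
        omegaReflection r' (omegaReflection r (omegaReflection r' x)) =
      ((ω - 1) * ω / 3 * (1 - (‖inner ℂ r r'‖ ^ 2 : ℝ) / 3)) •
        (inner ℂ r x • r - inner ℂ r' x • r') := by
  have hnorm : ((‖inner ℂ r r'‖ ^ 2 : ℝ) : ℂ) = inner ℂ r r' * inner ℂ r' r := by
    rw [← inner_conj_symm r' r, Complex.mul_conj']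
    push_cast
    rfl
  have hω := omega_sq_add_omega_add_one
  simp only [omegaReflection, inner_add_right, inner_smul_right, h3, h3', hnorm, smul_sub,
    smul_smul]
  match_scalars
  · ring
  · linear_combination
      ((ω - 1) * inner ℂ r x * inner ℂ r' r * inner ℂ r r' / 27) * hω
  · linear_combination
      (-(ω - 1) * inner ℂ r' x * inner ℂ r' r * inner ℂ r r' / 27) * hω

theorem omegaReflection_comm_sub (r r' x : V) :
    omegaReflection r (omegaReflection r' x) - omegaReflection r' (omegaReflection r x) =
      ((ω - 1) ^ 2 / 9 * inner ℂ r r' * inner ℂ r' x) • r -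
        ((ω - 1) ^ 2 / 9 * inner ℂ r' r * inner ℂ r x) • r' := by
  simp only [omegaReflection, inner_add_right, inner_smul_right]
  match_scalars <;> ring

theorem omegaReflection_braid_iff {r r' : V} (h3 : inner ℂ r r = (3 : ℂ))
    (h3' : inner ℂ r' r' = (3 : ℂ)) (hind : LinearIndependent ℂ ![r, r']) :
    (∀ x, omegaReflection r (omegaReflection r' (omegaReflection r x)) =
        omegaReflection r' (omegaReflection r (omegaReflection r' x))) ↔
      ‖inner ℂ r r'‖ ^ 2 = 3 := by
  constructor
  · intro hbraid
    have hdefect := omegaReflection_braid_sub h3 h3' r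
    rw [sub_eq_zero.2 (hbraid r), h3, smul_sub, smul_smul, smul_smul, eq_comm,
      hind.pair_smul_sub_smul_eq_zero_iff] at hdefect
    have hfactor : (1 : ℂ) - (‖inner ℂ r r'‖ ^ 2 : ℝ) / 3 = 0 := by
      simpa [omega_ne_zero, omega_sub_one_ne_zero] using hdefect.1
    exact_mod_cast (by linear_combination -3 * hfactor : ((‖inner ℂ r r'‖ ^ 2 : ℝ) : ℂ) = 3)
  · intro hnorm x
    rw [← sub_eq_zero, omegaReflection_braid_sub h3 h3', hnorm]
    norm_num

theorem omegaReflection_comm_iff {r r' : V} (h3 : inner ℂ r r = (3 : ℂ))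
    (hind : LinearIndependent ℂ ![r, r']) :
    (∀ x, omegaReflection r (omegaReflection r' x) = omegaReflection r' (omegaReflection r x)) ↔
      inner ℂ r r' = (0 : ℂ) := by
  constructor
  · intro hcomm
    have hdefect := omegaReflection_comm_sub r r' r
    rw [sub_eq_zero.2 (hcomm r), h3, eq_comm, hind.pair_smul_sub_smul_eq_zero_iff] at hdefect
    have hconj : inner ℂ r' r = (0 : ℂ) := by
      simpa [omega_sub_one_ne_zero] using hdefect.2
    rwa [← inner_conj_symm, map_eq_zero] at hconj
  · intro h0 x
    rw [← sub_eq_zero, omegaReflection_comm_sub, h0, ← inner_conj_symm r' r, h0]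
    simp

end

/-- For nonproportional norm-3 vectors `r, r'` in a complex Hermitian (inner product)
space, the `ω`-reflections in `r` and `r'` braid iff `|⟨r,r'⟩|² = 3` and commute iff
`⟨r,r'⟩ = 0`.  (Mathlib's inner product is linear in the second variable, so the
paper's `⟨x,r⟩`, linear in `x`, is `inner r x` here.) -/
theorem stmt3 {V : Type*} [NormedAddCommGroup V] [InnerProductSpace ℂ V]
    (r r' : V)
    (h3 : (inner ℂ r r : ℂ) = 3) (h3' : (inner ℂ r' r' : ℂ) = 3)
    (hnp : ∀ c : ℂ, r' ≠ c • r)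
    (R R' : V → V)
    (hR : ∀ x, R x = x + ((ω - 1) * ((inner ℂ r x : ℂ) / 3)) • r)
    (hR' : ∀ x, R' x = x + ((ω - 1) * ((inner ℂ r' x : ℂ) / 3)) • r') :
    ((∀ x, R (R' (R x)) = R' (R (R' x))) ↔ ‖(inner ℂ r r' : ℂ)‖ ^ 2 = 3) ∧
    ((∀ x, R (R' x) = R' (R x)) ↔ (inner ℂ r r' : ℂ) = 0) := by
  obtain rfl : R = omegaReflection r := funext hR
  obtain rfl : R' = omegaReflection r' := funext hR'
  have hr : r ≠ 0 := by
    rintro rfl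
    simp at h3
  have hind : LinearIndependent ℂ ![r, r'] :=
    (LinearIndependent.pair_iff' hr).2 fun c h => hnp c h.symm
  exact ⟨omegaReflection_braid_iff h3 h3' hind, omegaReflection_comm_iff h3 hind⟩
end
end

section
/- The lattice E₈^E = {(x₁,...,x₄) ∈ E⁴ : (x₁,...,x₄) mod θ ∈ C₄}, where C₄ ⊆ 𝔽₃⁴ is the tetracode (the span of (0,1,1,1) and (1,0,1,-1)), satisfies E₈^E = θ·(E₈^E)'. -/
noncomputable section

/-- The tetracode `C₄ ⊆ 𝔽₃⁴`, spanned by `(0,1,1,1)` and `(1,0,1,-1)`. -/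
def tetracode : Submodule (ZMod 3) (Fin 4 → ZMod 3) :=
  Submodule.span (ZMod 3) {![0, 1, 1, 1], ![1, 0, 1, -1]}

/-- `E₈^E = {x ∈ Eis⁴ : x mod θ ∈ C₄}`. -/
def E8lat : Set (Fin 4 → ℂ) :=
  {x | (∀ i, x i ∈ Eis) ∧
    ∃ c ∈ tetracode, ∀ i, ∃ e ∈ Eis, x i - ((c i).val : ℂ) = θ * e}

/-- The standard Hermitian form on `ℂ⁴`. -/
def herm4 (x y : Fin 4 → ℂ) : ℂ := ∑ i, x i * (starRingEnd ℂ) (y i)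

/-- The dual lattice of `E₈^E`. -/
def E8dual : Set (Fin 4 → ℂ) := {v | ∀ x ∈ E8lat, herm4 x v ∈ Eis}

/-! Reduction modulo `θ` identifies `Eis/θ` with `𝔽₃` (`ω ≡ 1`, and `θ² = -3`), and
turns the Hermitian form into the dot product on `𝔽₃⁴`. Since the tetracode is self-dual, any
two vectors of `E₈^E` have inner product divisible by `θ`, so `θ⁻¹ E₈^E ⊆ (E₈^E)'`. Conversely,
pairing `v ∈ (E₈^E)'` with the vectors `θ eᵢ` shows `θ v ∈ Eis⁴`, and pairing it with lifts of
tetracode words shows that `θ v mod θ` is orthogonal to the tetracode, hence lies in it. -/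

lemma conj_omega : (starRingEnd ℂ) ω = -1 - ω := by
  simp only [ω, map_add, map_mul, map_div₀, map_neg, map_one, map_ofNat, Complex.conj_ofReal,
    Complex.conj_I]
  ring

lemma omega_sq : ω ^ 2 = -1 - ω := by
  have hsqrt : ((Real.sqrt 3 : ℝ) : ℂ) ^ 2 = 3 := by
    norm_cast; rw [Real.sq_sqrt]; norm_num
  simp only [ω]
  linear_combination (Complex.I ^ 2 / 4) * hsqrt + (3 / 4 : ℂ) * Complex.I_sq

lemma theta_eq : θ = 1 + 2 * ω := by
  rw [θ, conj_omega]; ring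

lemma theta_sq : θ ^ 2 = -3 := by
  rw [theta_eq]; linear_combination 4 * omega_sq

lemma conj_theta : (starRingEnd ℂ) θ = -θ := by
  rw [θ, map_sub, Complex.conj_conj]; ring

lemma theta_ne_zero : θ ≠ 0 := by
  intro h
  have h3 := theta_sq
  rw [h] at h3
  norm_num at h3

lemma eq_zero_of_intCast_add_mul_omega_eq_zero {a b : ℤ} (h : (a : ℂ) + b * ω = 0) :
    a = 0 ∧ b = 0 := by
  have hb : b = 0 := by simpa [ω] using congrArg Complex.im h
  subst hb
  exact ⟨by simpa using h, rfl⟩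

lemma omega_mem_Eis : ω ∈ Eis := Subring.subset_closure rfl

lemma mem_Eis_iff {z : ℂ} : z ∈ Eis ↔ ∃ m n : ℤ, z = m + n * ω := by
  constructor
  · intro hz
    induction hz using Subring.closure_induction with
    | mem x hx => exact ⟨0, 1, by rw [hx]; push_cast; ring⟩
    | zero => exact ⟨0, 0, by push_cast; ring⟩
    | one => exact ⟨1, 0, by push_cast; ring⟩
    | add x y _ _ hx hy =>
      obtain ⟨m, n, rfl⟩ := hx
      obtain ⟨p, q, rfl⟩ := hy
      exact ⟨m + p, n + q, by push_cast; ring⟩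
    | neg x _ hx =>
      obtain ⟨m, n, rfl⟩ := hx
      exact ⟨-m, -n, by push_cast; ring⟩
    | mul x y _ _ hx hy =>
      obtain ⟨m, n, rfl⟩ := hx
      obtain ⟨p, q, rfl⟩ := hy
      exact ⟨m * p - n * q, m * q + n * p - n * q, by
        push_cast; linear_combination (n * q : ℂ) * omega_sq⟩
  · rintro ⟨m, n, rfl⟩
    exact add_mem (intCast_mem Eis m) (mul_mem (intCast_mem Eis n) omega_mem_Eis)

lemma theta_mem_Eis : θ ∈ Eis := by
  rw [theta_eq]
  exact add_mem (one_mem Eis) (mul_mem (ofNat_mem Eis 2) omega_mem_Eis)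

lemma conj_mem_Eis {z : ℂ} (hz : z ∈ Eis) : (starRingEnd ℂ) z ∈ Eis := by
  obtain ⟨m, n, rfl⟩ := mem_Eis_iff.1 hz
  rw [map_add, map_mul, conj_omega, map_intCast, map_intCast]
  exact mem_Eis_iff.2 ⟨m - n, -n, by push_cast; ring⟩

def thetaEis : AddSubgroup ℂ where
  carrier := {z | ∃ e ∈ Eis, z = θ * e}
  add_mem' := by
    rintro _ _ ⟨e, he, rfl⟩ ⟨f, hf, rfl⟩
    exact ⟨e + f, add_mem he hf, by ring⟩
  zero_mem' := ⟨0, zero_mem Eis, by ring⟩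
  neg_mem' := by
    rintro _ ⟨e, he, rfl⟩
    exact ⟨-e, neg_mem he, by ring⟩

lemma thetaEis_le_Eis {z : ℂ} (hz : z ∈ thetaEis) : z ∈ Eis := by
  obtain ⟨e, he, rfl⟩ := hz
  exact mul_mem theta_mem_Eis he

lemma theta_mul_mem_thetaEis {e : ℂ} (he : e ∈ Eis) : θ * e ∈ thetaEis := ⟨e, he, rfl⟩

lemma mul_mem_thetaEis {a z : ℂ} (ha : a ∈ Eis) (hz : z ∈ thetaEis) : a * z ∈ thetaEis := by
  obtain ⟨e, he, rfl⟩ := hz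
  exact ⟨a * e, mul_mem ha he, by ring⟩

lemma conj_mem_thetaEis {z : ℂ} (hz : z ∈ thetaEis) : (starRingEnd ℂ) z ∈ thetaEis := by
  obtain ⟨e, he, rfl⟩ := hz
  exact ⟨-(starRingEnd ℂ) e, neg_mem (conj_mem_Eis he), by rw [map_mul, conj_theta]; ring⟩

lemma mul_sub_mul_mem_thetaEis {a a' b b' : ℂ} (ha' : a' ∈ Eis) (hb : b ∈ Eis)
    (ha : a - a' ∈ thetaEis) (hb' : b - b' ∈ thetaEis) : a * b - a' * b' ∈ thetaEis := by
  have : a * b - a' * b' = b * (a - a') + a' * (b - b') := by ring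
  rw [this]
  exact add_mem (mul_mem_thetaEis hb ha) (mul_mem_thetaEis ha' hb')

lemma intCast_mem_thetaEis_iff (k : ℤ) : (k : ℂ) ∈ thetaEis ↔ (k : ZMod 3) = 0 := by
  rw [ZMod.intCast_zmod_eq_zero_iff_dvd]
  constructor
  · rintro ⟨e, he, hk⟩
    obtain ⟨p, q, rfl⟩ := mem_Eis_iff.1 he
    have h0 : ((k - (p - 2 * q) : ℤ) : ℂ) + ((-(2 * p - q) : ℤ) : ℂ) * ω = 0 := by
      rw [theta_eq] at hk
      push_cast
      linear_combination hk + (2 * q : ℂ) * omega_sq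
    obtain ⟨h1, h2⟩ := eq_zero_of_intCast_add_mul_omega_eq_zero h0
    exact ⟨-p, by omega⟩
  · rintro ⟨j, rfl⟩
    refine ⟨-θ * j, mul_mem (neg_mem theta_mem_Eis) (intCast_mem Eis j), ?_⟩
    push_cast
    linear_combination (j : ℂ) * theta_sq

lemma natCast_mem_thetaEis_iff (k : ℕ) : (k : ℂ) ∈ thetaEis ↔ (k : ZMod 3) = 0 := by
  exact_mod_cast intCast_mem_thetaEis_iff k

lemma omega_sub_one_mem_thetaEis : ω - 1 ∈ thetaEis :=
  ⟨-ω ^ 2, neg_mem (pow_mem omega_mem_Eis 2), by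
    rw [theta_eq]; linear_combination (2 * ω - 1) * omega_sq⟩

lemma exists_sub_val_mem_thetaEis {z : ℂ} (hz : z ∈ Eis) :
    ∃ r : ZMod 3, z - (r.val : ℂ) ∈ thetaEis := by
  obtain ⟨m, n, rfl⟩ := mem_Eis_iff.1 hz
  refine ⟨(m + n : ℤ), ?_⟩
  have hint : (((m + n - ((m + n : ℤ) : ZMod 3).val : ℤ)) : ℂ) ∈ thetaEis :=
    (intCast_mem_thetaEis_iff _).2 (by simp)
  have hsplit : (m : ℂ) + n * ω - (((m + n : ℤ) : ZMod 3).val : ℂ)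
      = n * (ω - 1) + (((m + n - ((m + n : ℤ) : ZMod 3).val : ℤ)) : ℂ) := by
    push_cast; ring
  rw [hsplit]
  exact add_mem (mul_mem_thetaEis (intCast_mem Eis n) omega_sub_one_mem_thetaEis) hint

open Matrix in
lemma mem_tetracode_iff {r : Fin 4 → ZMod 3} :
    r ∈ tetracode ↔ ∀ g ∈ tetracode, g ⬝ᵥ r = 0 := by
  have hgen₁ : ![0, 1, 1, 1] ∈ tetracode := Submodule.subset_span (Set.mem_insert _ _)
  have hgen₂ : ![1, 0, 1, -1] ∈ tetracode := Submodule.subset_span (Set.mem_insert_of_mem _ rfl)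
  constructor
  · intro hr g hg
    obtain ⟨a, b, rfl⟩ := Submodule.mem_span_pair.1 hg
    obtain ⟨c, d, rfl⟩ := Submodule.mem_span_pair.1 hr
    simp only [dotProduct, Fin.sum_univ_four, Pi.add_apply, Pi.smul_apply, smul_eq_mul,
      Matrix.cons_val]
    grind
  · intro h
    have h₁ := h _ hgen₁
    have h₂ := h _ hgen₂
    simp only [dotProduct, Fin.sum_univ_four, Matrix.cons_val] at h₁ h₂
    refine Submodule.mem_span_pair.2 ⟨r 1, r 2 - r 1, ?_⟩
    funext i
    fin_cases i <;>
      simp only [Fin.zero_eta, Fin.mk_one, Fin.reduceFinMk, Pi.add_apply, Pi.smul_apply,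
        smul_eq_mul, Matrix.cons_val_zero, Matrix.cons_val_one, Matrix.cons_val] <;> grind

lemma herm4_smul_right (a : ℂ) (x y : Fin 4 → ℂ) :
    herm4 x (a • y) = (starRingEnd ℂ) a * herm4 x y := by
  simp only [herm4, Finset.mul_sum, Pi.smul_apply, smul_eq_mul, map_mul]
  exact Finset.sum_congr rfl fun i _ => by ring

lemma herm4_single_left (i : Fin 4) (a : ℂ) (v : Fin 4 → ℂ) :
    herm4 (Pi.single i a) v = a * (starRingEnd ℂ) (v i) := by
  simp [herm4, Pi.single_apply]

lemma herm4_mem_thetaEis {x y : Fin 4 → ℂ} (hx : x ∈ E8lat) (hy : y ∈ E8lat) :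
    herm4 x y ∈ thetaEis := by
  obtain ⟨-, c, hc, hxc⟩ := hx
  obtain ⟨hyE, d, hd, hyd⟩ := hy
  have hterm : ∀ i, x i * (starRingEnd ℂ) (y i) - (c i).val * (d i).val ∈ thetaEis := fun i =>
    mul_sub_mul_mem_thetaEis (natCast_mem Eis _) (conj_mem_Eis (hyE i)) (hxc i)
      (by simpa only [map_sub, map_natCast] using conj_mem_thetaEis (hyd i))
  have hdot : ∑ i, ((c i).val : ℂ) * (d i).val ∈ thetaEis := by
    exact_mod_cast (natCast_mem_thetaEis_iff _).2
      (by simpa [dotProduct] using mem_tetracode_iff.1 hd c hc)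
  have hsum := add_mem (sum_mem (t := Finset.univ) fun i _ => hterm i) hdot
  rwa [Finset.sum_sub_distrib, sub_add_cancel] at hsum

lemma inv_theta_smul_mem_E8dual {z : Fin 4 → ℂ} (hz : z ∈ E8lat) : θ⁻¹ • z ∈ E8dual := by
  intro y hy
  obtain ⟨e, he, hyz⟩ := herm4_mem_thetaEis hy hz
  rw [herm4_smul_right, map_inv₀, conj_theta, hyz, inv_neg, neg_mul,
    inv_mul_cancel_left₀ theta_ne_zero]
  exact neg_mem he

lemma single_theta_mem_E8lat (i : Fin 4) : (Pi.single i θ : Fin 4 → ℂ) ∈ E8lat := by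
  have h : ∀ j, (Pi.single i θ : Fin 4 → ℂ) j ∈ thetaEis := fun j => by
    rcases eq_or_ne j i with rfl | hj
    · simpa using theta_mul_mem_thetaEis (one_mem Eis)
    · simp [hj, zero_mem]
  exact ⟨fun j => thetaEis_le_Eis (h j), 0, zero_mem _,
    fun j => show _ ∈ thetaEis by simpa using h j⟩

lemma natCast_val_mem_E8lat {g : Fin 4 → ZMod 3} (hg : g ∈ tetracode) :
    (fun i => ((g i).val : ℂ)) ∈ E8lat :=
  ⟨fun i => natCast_mem Eis _, g, hg,
    fun i => show _ ∈ thetaEis by rw [sub_self]; exact zero_mem _⟩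

lemma theta_mul_mem_Eis_of_mem_E8dual {v : Fin 4 → ℂ} (hv : v ∈ E8dual) (i : Fin 4) :
    θ * v i ∈ Eis := by
  have h := conj_mem_Eis (hv _ (single_theta_mem_E8lat i))
  rw [herm4_single_left, map_mul, conj_theta, Complex.conj_conj] at h
  simpa using neg_mem h

lemma sum_val_mul_theta_mul_mem_thetaEis {v : Fin 4 → ℂ} (hv : v ∈ E8dual)
    {g : Fin 4 → ZMod 3} (hg : g ∈ tetracode) :
    ∑ i, ((g i).val : ℂ) * (θ * v i) ∈ thetaEis := by
  convert theta_mul_mem_thetaEis (conj_mem_Eis (hv _ (natCast_val_mem_E8lat hg))) using 1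
  simp only [herm4, map_sum, map_mul, map_natCast, Complex.conj_conj, Finset.mul_sum]
  exact Finset.sum_congr rfl fun i _ => by ring

lemma theta_smul_mem_E8lat {v : Fin 4 → ℂ} (hv : v ∈ E8dual) : θ • v ∈ E8lat := by
  have hE := theta_mul_mem_Eis_of_mem_E8dual hv
  choose r hr using fun i => exists_sub_val_mem_thetaEis (hE i)
  refine ⟨hE, r, mem_tetracode_iff.2 fun g hg => ?_, hr⟩
  have hdiff : ∑ i, ((g i).val : ℂ) * (θ * v i - (r i).val) ∈ thetaEis :=
    sum_mem fun i _ => mul_mem_thetaEis (natCast_mem Eis _) (hr i)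
  have hdot : ((∑ i, (g i).val * (r i).val : ℕ) : ℂ) ∈ thetaEis := by
    have := sub_mem (sum_val_mul_theta_mul_mem_thetaEis hv hg) hdiff
    simp only [mul_sub, Finset.sum_sub_distrib, sub_sub_cancel] at this
    exact_mod_cast this
  simpa [dotProduct] using (natCast_mem_thetaEis_iff _).1 hdot

/-- `E₈^E = θ·(E₈^E)'`. -/
theorem stmt6 : E8lat = {z | ∃ v ∈ E8dual, z = θ • v} := by
  ext z
  refine ⟨fun hz => ⟨θ⁻¹ • z, inv_theta_smul_mem_E8dual hz, ?_⟩, ?_⟩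
  · rw [smul_inv_smul₀ theta_ne_zero]
  · rintro ⟨v, hv, rfl⟩
    exact theta_smul_mem_E8lat hv
end
end

section
/- The 54 vectors of minimal norm (norm 2) in θ(E₆^E)' = {(x,y,z) ∈ E³ : x+y+z ≡ 0 mod θ} are exactly the vectors obtained from (1,-1,0) by permuting coordinates, multiplying individual coordinates by cube roots of unity, and global negation. -/
/-! Writing `z = a + b ω` identifies `E` with `ℤ²`; the norm becomes `a² - a b + b²` and, since
`ω ≡ 1 mod θ`, `θ ∣ z` becomes `3 ∣ a + b`. This form never takes the value `2`, and its values
`≤ 2` are attained only at `0` and the six units `±1, ±ω, ±ω²`. So a vector of norm `≤ 2` has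
coordinates in a set of seven elements: a single unit coordinate is not divisible by `θ`, which
gives the minimum `2`, and a vector of norm `2` has exactly two unit coordinates `u, v` with
`u ≡ -v mod θ`, i.e. one is a cube root of unity and the other minus one. -/

noncomputable section

/-- The standard Hermitian form on `ℂ³`. -/
def herm3 (x y : Fin 3 → ℂ) : ℂ := ∑ i, x i * (starRingEnd ℂ) (y i)

/-- `θ(E₆^E)' = {(x,y,z) ∈ Eis³ : x+y+z ≡ 0 mod θ}`. -/
def T9 : Set (Fin 3 → ℂ) :=
  {x | (∀ i, x i ∈ Eis) ∧ ∃ e ∈ Eis, x 0 + x 1 + x 2 = θ * e}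

@[simp] lemma omega_re : ω.re = -1 / 2 := by simp [ω]

@[simp] lemma omega_im : ω.im = Real.sqrt 3 / 2 := by simp [ω]

def eisOf : ℤ × ℤ →+ ℂ where
  toFun p := p.1 + p.2 * ω
  map_zero' := by simp
  map_add' p r := by simp only [Prod.fst_add, Prod.snd_add]; push_cast; ring

lemma eisOf_apply (p : ℤ × ℤ) : eisOf p = p.1 + p.2 * ω := rfl

lemma eisOf_mul (p r : ℤ × ℤ) :
    eisOf p * eisOf r = eisOf (p.1 * r.1 - p.2 * r.2, p.1 * r.2 + p.2 * r.1 - p.2 * r.2) := by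
  simp only [eisOf_apply]
  push_cast
  linear_combination (p.2 * r.2 : ℂ) * omega_sq

lemma eisOf_injective : Function.Injective eisOf := by
  rintro ⟨a, b⟩ ⟨c, d⟩ h
  have him := congrArg Complex.im h
  have hre := congrArg Complex.re h
  simp [eisOf_apply] at him hre
  subst him
  simpa using hre

lemma mem_Eis_iff_s9 {z : ℂ} : z ∈ Eis ↔ ∃ p, eisOf p = z := by
  refine ⟨fun hz => ?_, ?_⟩
  · induction hz using Subring.closure_induction with
    | mem w hw => exact ⟨(0, 1), by rw [Set.mem_singleton_iff.1 hw]; simp [eisOf_apply]⟩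
    | zero => exact ⟨0, map_zero eisOf⟩
    | one => exact ⟨(1, 0), by simp [eisOf_apply]⟩
    | add _ _ _ _ ihx ihy =>
      obtain ⟨⟨p, rfl⟩, ⟨r, rfl⟩⟩ := And.intro ihx ihy
      exact ⟨p + r, map_add eisOf p r⟩
    | neg _ _ ihx =>
      obtain ⟨p, rfl⟩ := ihx
      exact ⟨-p, map_neg eisOf p⟩
    | mul _ _ _ _ ihx ihy =>
      obtain ⟨⟨p, rfl⟩, ⟨r, rfl⟩⟩ := And.intro ihx ihy
      exact ⟨_, (eisOf_mul p r).symm⟩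
  · rintro ⟨p, rfl⟩
    exact add_mem (intCast_mem Eis _) (mul_mem (intCast_mem Eis _) (Subring.subset_closure rfl))

def eisNorm (p : ℤ × ℤ) : ℤ := p.1 ^ 2 - p.1 * p.2 + p.2 ^ 2

lemma normSq_eisOf (p : ℤ × ℤ) : Complex.normSq (eisOf p) = eisNorm p := by
  have h3 : Real.sqrt 3 ^ 2 = 3 := Real.sq_sqrt (by norm_num)
  simp [Complex.normSq_apply, eisOf_apply, eisNorm, ω]
  linear_combination ((p.2 : ℝ) ^ 2 / 4) * h3

lemma eisNorm_nonneg (p : ℤ × ℤ) : 0 ≤ eisNorm p := by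
  unfold eisNorm
  nlinarith [sq_nonneg (2 * p.1 - p.2), sq_nonneg p.2]

def smallPairs : Finset (ℤ × ℤ) := {(0, 0), (1, 0), (0, 1), (-1, -1), (-1, 0), (0, -1), (1, 1)}

lemma mem_smallPairs_of_eisNorm_le_two {p : ℤ × ℤ} (h : eisNorm p ≤ 2) : p ∈ smallPairs := by
  obtain ⟨a, b⟩ := p
  unfold eisNorm at h
  have ha : -1 ≤ a ∧ a ≤ 1 := by
    constructor <;> nlinarith [sq_nonneg (2 * b - a), sq_nonneg (a - 2), sq_nonneg (a + 2)]
  have hb : -1 ≤ b ∧ b ≤ 1 := by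
    constructor <;> nlinarith [sq_nonneg (2 * a - b), sq_nonneg (b - 2), sq_nonneg (b + 2)]
  obtain ⟨ha₁, ha₂⟩ := ha
  obtain ⟨hb₁, hb₂⟩ := hb
  interval_cases a <;> interval_cases b <;> simp_all [smallPairs]

lemma theta_mul_eisOf (r : ℤ × ℤ) : θ * eisOf r = eisOf (r.1 - 2 * r.2, 2 * r.1 - r.2) := by
  rw [theta_eq, show (1 + 2 * ω : ℂ) = eisOf (1, 2) by simp [eisOf_apply], eisOf_mul]
  congr 2 <;> ring

lemma theta_dvd_eisOf_iff (p : ℤ × ℤ) : (∃ e ∈ Eis, eisOf p = θ * e) ↔ 3 ∣ p.1 + p.2 := by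
  simp only [mem_Eis_iff_s9, exists_exists_eq_and, theta_mul_eisOf, eisOf_injective.eq_iff]
  constructor
  · rintro ⟨r, rfl⟩
    exact ⟨r.1 - r.2, by ring⟩
  · rintro ⟨m, hm⟩
    exact ⟨(p.2 - m, m - p.1), by ext <;> dsimp only <;> omega⟩

lemma mem_piFinset_smallPairs {ι : Type*} [Fintype ι] [DecidableEq ι] {q : ι → ℤ × ℤ}
    (h : ∑ i, eisNorm (q i) ≤ 2) : q ∈ Fintype.piFinset fun _ => smallPairs :=
  Fintype.mem_piFinset.2 fun i => mem_smallPairs_of_eisNorm_le_two <|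
    (Finset.single_le_sum (fun j _ => eisNorm_nonneg (q j)) (Finset.mem_univ i)).trans h

lemma mem_T9_iff {x : Fin 3 → ℂ} :
    x ∈ T9 ↔ ∃ q : Fin 3 → ℤ × ℤ, eisOf ∘ q = x ∧ 3 ∣ (∑ i, q i).1 + (∑ i, q i).2 := by
  have hsum (q : Fin 3 → ℤ × ℤ) : eisOf (∑ i, q i) = eisOf (q 0) + eisOf (q 1) + eisOf (q 2) := by
    rw [map_sum, Fin.sum_univ_three]
  constructor
  · rintro ⟨hx, hθ⟩
    choose q hq using fun i => mem_Eis_iff_s9.1 (hx i)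
    refine ⟨q, funext hq, (theta_dvd_eisOf_iff _).1 ?_⟩
    rwa [hsum, hq, hq, hq]
  · rintro ⟨q, rfl, hdvd⟩
    refine ⟨fun i => mem_Eis_iff_s9.2 ⟨q i, rfl⟩, ?_⟩
    have hθ := (theta_dvd_eisOf_iff _).2 hdvd
    rwa [hsum] at hθ

lemma herm3_eisOf_comp (q : Fin 3 → ℤ × ℤ) :
    herm3 (eisOf ∘ q) (eisOf ∘ q) = ((∑ i, eisNorm (q i) : ℤ) : ℂ) := by
  simp only [herm3, Function.comp_apply, Complex.mul_conj, normSq_eisOf]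
  push_cast
  rfl

lemma two_le_sum_eisNorm :
    ∀ q ∈ Fintype.piFinset (fun _ : Fin 3 => smallPairs),
      3 ∣ (∑ i, q i).1 + (∑ i, q i).2 → q ≠ 0 → 2 ≤ ∑ i, eisNorm (q i) := by
  decide +kernel

lemma two_le_herm3 {x : Fin 3 → ℂ} (hx : x ∈ T9) (hx₀ : x ≠ 0) : 2 ≤ (herm3 x x).re := by
  obtain ⟨q, rfl, hdvd⟩ := mem_T9_iff.1 hx
  rw [herm3_eisOf_comp, Complex.intCast_re]
  by_contra! hlt
  have hlt : ∑ i, eisNorm (q i) < 2 := by exact_mod_cast hlt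
  have hq : q ≠ 0 := by
    rintro rfl
    exact hx₀ (funext fun _ => map_zero eisOf)
  exact hlt.not_ge (two_le_sum_eisNorm q (mem_piFinset_smallPairs hlt.le) hdvd hq)

def normTwoCoords : Finset (Fin 3 → ℤ × ℤ) :=
  (Fintype.piFinset fun _ => smallPairs).filter fun q =>
    3 ∣ (∑ i, q i).1 + (∑ i, q i).2 ∧ ∑ i, eisNorm (q i) = 2

lemma mem_T9_herm3_eq_two_iff {x : Fin 3 → ℂ} :
    x ∈ T9 ∧ herm3 x x = 2 ↔ ∃ q ∈ normTwoCoords, eisOf ∘ q = x := by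
  constructor
  · rintro ⟨hx, h2⟩
    obtain ⟨q, rfl, hdvd⟩ := mem_T9_iff.1 hx
    rw [herm3_eisOf_comp] at h2
    have h2 : ∑ i, eisNorm (q i) = 2 := by exact_mod_cast h2
    exact ⟨q, Finset.mem_filter.2 ⟨mem_piFinset_smallPairs h2.le, hdvd, h2⟩, rfl⟩
  · rintro ⟨q, hq, rfl⟩
    obtain ⟨-, hdvd, h2⟩ := Finset.mem_filter.1 hq
    exact ⟨mem_T9_iff.2 ⟨q, rfl, hdvd⟩, by rw [herm3_eisOf_comp, h2]; norm_num⟩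

lemma card_normTwoCoords : normTwoCoords.card = 54 := by
  decide +kernel

def cubeRootPairs : Finset (ℤ × ℤ) := {(1, 0), (0, 1), (-1, -1)}

lemma mem_cubeRoots_iff_eisOf {w : ℂ} : w ∈ ({1, ω, ω ^ 2} : Set ℂ) ↔
    ∃ p ∈ cubeRootPairs, eisOf p = w := by
  simp [cubeRootPairs, eisOf_apply, omega_sq, eq_comm, sub_eq_add_neg]

/-- The coordinates of `s * u i * ![1, -1, 0] (σ i)`, with `u i = eisOf (p i)` and `s = n`. -/
def orbitCoords : Finset (Fin 3 → ℤ × ℤ) :=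
  (Finset.univ ×ˢ (Fintype.piFinset fun _ => cubeRootPairs) ×ˢ {1, -1}).image
    fun t : Equiv.Perm (Fin 3) × (Fin 3 → ℤ × ℤ) × ℤ =>
      fun i => (t.2.2 * ![1, -1, 0] (t.1 i)) • t.2.1 i

lemma orbit_iff_exists_orbitCoords {x : Fin 3 → ℂ} :
    (∃ σ : Equiv.Perm (Fin 3), ∃ u : Fin 3 → ℂ, (∀ i, u i ∈ ({1, ω, ω ^ 2} : Set ℂ)) ∧
        ∃ s : ℂ, (s = 1 ∨ s = -1) ∧ x = fun i => s * u i * ![1, -1, 0] (σ i)) ↔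
      ∃ q ∈ orbitCoords, eisOf ∘ q = x := by
  have hterm (n : ℤ) (p : ℤ × ℤ) (j : Fin 3) :
      (n : ℂ) * eisOf p * ![1, -1, 0] j = eisOf ((n * ![1, -1, 0] j) • p) := by
    rw [map_zsmul, zsmul_eq_mul]
    fin_cases j <;> simp
  constructor
  · rintro ⟨σ, u, hu, s, hs, rfl⟩
    choose p hp hpu using fun i => mem_cubeRoots_iff_eisOf.1 (hu i)
    obtain ⟨n, hn, rfl⟩ : ∃ n ∈ ({1, -1} : Finset ℤ), (n : ℂ) = s := by
      rcases hs with rfl | rfl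
      exacts [⟨1, by simp, by simp⟩, ⟨-1, by simp, by simp⟩]
    refine ⟨_, Finset.mem_image_of_mem _ (show (σ, p, n) ∈ _ from Finset.mem_product.2
      ⟨Finset.mem_univ σ, Finset.mem_product.2 ⟨Fintype.mem_piFinset.2 hp, hn⟩⟩), ?_⟩
    funext i
    simp only [Function.comp_apply, ← hpu, hterm]
  · rintro ⟨q, hq, rfl⟩
    obtain ⟨⟨σ, p, n⟩, ht, rfl⟩ := Finset.mem_image.1 hq
    simp only [Finset.mem_product, Fintype.mem_piFinset, Finset.mem_univ, true_and,
      Finset.mem_insert, Finset.mem_singleton] at ht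
    refine ⟨σ, eisOf ∘ p, fun i => mem_cubeRoots_iff_eisOf.2 ⟨p i, ht.1 i, rfl⟩, n, ?_,
      funext fun i => (hterm n (p i) (σ i)).symm⟩
    rcases ht.2 with rfl | rfl <;> simp

lemma normTwoCoords_eq_orbitCoords : normTwoCoords = orbitCoords := by
  decide +kernel

/-- The vectors of minimal norm 2 in `θ(E₆^E)'` are exactly the 54 vectors obtained
from `(1,-1,0)` by permuting coordinates, multiplying the coordinates by cube roots
of unity, and global negation. -/
theorem stmt9 :
    (∀ x ∈ T9, x ≠ 0 → (2 : ℝ) ≤ (herm3 x x).re) ∧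
    {x | x ∈ T9 ∧ herm3 x x = 2} =
      {x | ∃ σ : Equiv.Perm (Fin 3), ∃ u : Fin 3 → ℂ,
        (∀ i, u i ∈ ({1, ω, ω ^ 2} : Set ℂ)) ∧
        ∃ s : ℂ, (s = 1 ∨ s = -1) ∧ x = fun i => s * u i * ![1, -1, 0] (σ i)} ∧
    {x | x ∈ T9 ∧ herm3 x x = 2}.ncard = 54 := by
  have hcoords : {x | x ∈ T9 ∧ herm3 x x = 2} = ↑(normTwoCoords.image (eisOf ∘ ·)) := by
    ext x
    simp only [Set.mem_ofPred, mem_T9_herm3_eq_two_iff, Finset.coe_image, Set.mem_image,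
      Finset.mem_coe]
  refine ⟨fun x hx hx₀ => two_le_herm3 hx hx₀, ?_, ?_⟩
  · ext x
    refine mem_T9_herm3_eq_two_iff.trans ?_
    rw [normTwoCoords_eq_orbitCoords]
    exact orbit_iff_exists_orbitCoords.symm
  · rw [hcoords, Set.ncard_coe_finset,
      Finset.card_image_of_injective _ eisOf_injective.comp_left, card_normTwoCoords]
end
end

section
/- Let C ⊆ 𝔽₃^13 be the 'line difference code': the span of all differences χ_ℓ - χ_m of characteristic functions of lines ℓ, m of the projective plane P²𝔽₃ (coordinates indexed by the 13 points). Then C is self-orthogonal and dim C = 6, hence dim C^⊥ = 7 and C^⊥ is spanned by the characteristic functions of lines. -/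
noncomputable section
open scoped Classical

/-- The projective plane `P²𝔽₃` (13 points; lines are also parametrized by this
type via the standard bilinear form). -/
abbrev P2F3 := Projectivization (ZMod 3) (Fin 3 → ZMod 3)

instance : Finite P2F3 := Quotient.finite _
noncomputable instance : Fintype P2F3 := Fintype.ofFinite P2F3

/-- Incidence: the line with coordinates `ℓ` passes through the point `p`. -/
def incid (ℓ p : P2F3) : Prop := ∑ i, ℓ.rep i * p.rep i = 0

/-- The characteristic function (in `𝔽₃^13`) of the line `ℓ`. -/
def chi (ℓ : P2F3) : P2F3 → ZMod 3 := fun p => if incid ℓ p then 1 else 0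

/-- The standard bilinear form on `𝔽₃^13`. -/
def dotP (x y : P2F3 → ZMod 3) : ZMod 3 := ∑ p, x p * y p

/-- The line difference code `C`: the span of the differences of characteristic
functions of lines. -/
def Cdiff : Submodule (ZMod 3) (P2F3 → ZMod 3) :=
  Submodule.span (ZMod 3) {v | ∃ ℓ m : P2F3, v = chi ℓ - chi m}

/-- The orthogonal complement `C^⊥`. -/
def CdiffPerp : Submodule (ZMod 3) (P2F3 → ZMod 3) where
  carrier := {y | ∀ x ∈ Cdiff, dotP x y = 0}
  zero_mem' := by intro x hx; simp [dotP]
  add_mem' := by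
    intro a b ha hb x hx
    have : dotP x (a + b) = dotP x a + dotP x b := by
      simp [dotP, mul_add, Finset.sum_add_distrib]
    simp only [Set.mem_setOf_eq] at ha hb ⊢
    rw [this, ha x hx, hb x hx, add_zero]
  smul_mem' := by
    intro c y hy x hx
    have : dotP x (c • y) = c * dotP x y := by
      simp [dotP, Finset.mul_sum]; ring_nf
      exact Finset.sum_congr rfl fun p _ => by ring
    simp only [Set.mem_setOf_eq] at hy ⊢
    rw [this, hy x hx, mul_zero]


/-!
Any two lines of `P²𝔽₃` meet in one point and every line has `4 ≡ 1` points, so all the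
characteristic functions `χ_ℓ` have pairwise inner product `1`. Hence the differences
`χ_ℓ - χ_m` are orthogonal to every `χ_n`: `C ≤ span χ ≤ C^⊥`, and `χ_ℓ₀ ∉ C`, so
`dim span χ = dim C + 1`. With `dim C + dim C^⊥ = 13` this gives `dim span χ ≤ 7`, and an
explicit unitriangular `7 × 7` incidence minor gives `dim span χ ≥ 7`.
-/

open Module Submodule

theorem Submodule.span_sub_le_span_range {R M L : Type*} [Ring R] [AddCommGroup M] [Module R M]
    (χ : L → M) : span R {v | ∃ ℓ m, v = χ ℓ - χ m} ≤ span R (Set.range χ) :=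
  span_le.2 fun _ ⟨ℓ, m, hv⟩ =>
    hv ▸ sub_mem (subset_span ⟨ℓ, rfl⟩) (subset_span ⟨m, rfl⟩)

namespace LinearMap.BilinForm

theorem span_range_le_orthogonal_span_sub {R M L : Type*} [CommRing R] [AddCommGroup M]
    [Module R M] {B : LinearMap.BilinForm R M} {χ : L → M} {c : R}
    (hχ : ∀ ℓ m, B (χ ℓ) (χ m) = c) :
    span R (Set.range χ) ≤ B.orthogonal (span R {v | ∃ ℓ m, v = χ ℓ - χ m}) := by
  refine span_le.2 ?_
  rintro _ ⟨n, rfl⟩ x hx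
  have hker : span R {v | ∃ ℓ m, v = χ ℓ - χ m} ≤ LinearMap.ker (B.flip (χ n)) := by
    refine span_le.2 ?_
    rintro _ ⟨ℓ, m, rfl⟩
    simp [hχ]
  exact hker hx

theorem finrank_span_sub_add_one {K V L : Type*} [Field K] [AddCommGroup V] [Module K V]
    [FiniteDimensional K V] {B : LinearMap.BilinForm K V} {χ : L → V} {c : K}
    (hχ : ∀ ℓ m, B (χ ℓ) (χ m) = c) (hc : c ≠ 0) (ℓ₀ : L) :
    finrank K (span K {v | ∃ ℓ m, v = χ ℓ - χ m}) + 1 =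
      finrank K (span K (Set.range χ)) := by
  set D := span K {v | ∃ ℓ m, v = χ ℓ - χ m}
  have hnotMem : χ ℓ₀ ∉ D := fun h => hc <| by
    simpa [hχ] using span_range_le_orthogonal_span_sub hχ (subset_span ⟨ℓ₀, rfl⟩) _ h
  have hsup : D ⊔ K ∙ χ ℓ₀ = span K (Set.range χ) := by
    apply le_antisymm
    · refine sup_le (span_sub_le_span_range χ) ?_
      exact (span_singleton_le_iff_mem _ _).2 (subset_span ⟨ℓ₀, rfl⟩)
    · refine span_le.2 ?_
      rintro _ ⟨ℓ, rfl⟩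
      rw [← sub_add_cancel (χ ℓ) (χ ℓ₀)]
      exact add_mem (mem_sup_left (subset_span ⟨ℓ, ℓ₀, rfl⟩))
        (mem_sup_right (mem_span_singleton_self _))
  rw [← hsup, finrank_sup_span_singleton hnotMem]

end LinearMap.BilinForm

theorem nondegenerate_dotProductBilin (R ι : Type*) [CommRing R] [Fintype ι] :
    (dotProductBilin R R : LinearMap.BilinForm R (ι → R)).Nondegenerate :=
  ⟨fun _ hx => dotProduct_eq_zero_iff.1 hx,
    fun _ hy => dotProduct_eq_zero_iff.1 fun x => by rw [dotProduct_comm]; exact hy x⟩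

theorem linearIndependent_of_det_ne_zero {R ι m : Type*} [CommRing R] [IsDomain R] [Fintype m]
    [DecidableEq m] {v : m → ι → R} (p : m → ι)
    (h : (Matrix.of fun i j => v i (p j)).det ≠ 0) :
    LinearIndependent R v :=
  (Matrix.linearIndependent_rows_of_det_ne_zero h).of_comp (LinearMap.funLeft R R p)

theorem incid_iff_orthogonal (ℓ p : P2F3) : incid ℓ p ↔ ℓ.orthogonal p := by
  conv_rhs => rw [← ℓ.mk_rep, ← p.mk_rep, Projectivization.orthogonal_mk]
  rfl

namespace P2F3

def reps : Fin 13 → Fin 3 → ZMod 3 :=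
  ![![1,0,0], ![1,0,1], ![1,0,2], ![1,1,0], ![1,1,1], ![1,1,2], ![1,2,0], ![1,2,1], ![1,2,2],
    ![0,1,0], ![0,1,1], ![0,1,2], ![0,0,1]]

theorem reps_ne_zero : ∀ i, reps i ≠ 0 := by decide

def point (i : Fin 13) : P2F3 := Projectivization.mk (ZMod 3) (reps i) (reps_ne_zero i)

theorem card_eq : Fintype.card P2F3 = 13 := by
  rw [Fintype.card_eq_nat_card, Projectivization.card'']
  simp

theorem point_bijective : Function.Bijective point := by
  refine (Fintype.bijective_iff_injective_and_card point).2
    ⟨fun i j h => ?_, by simp [card_eq]⟩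
  rw [point, point, Projectivization.mk_eq_mk_iff'] at h
  revert i j h
  decide

theorem chi_point (i j : Fin 13) :
    chi (point i) (point j) = if reps i ⬝ᵥ reps j = 0 then 1 else 0 := by
  simp only [chi, incid_iff_orthogonal, point, Projectivization.orthogonal_mk]

end P2F3

open P2F3

theorem dotP_chi_chi (ℓ m : P2F3) : dotP (chi ℓ) (chi m) = 1 := by
  obtain ⟨i, rfl⟩ := point_bijective.2 ℓ
  obtain ⟨j, rfl⟩ := point_bijective.2 m
  rw [dotP, ← Equiv.sum_comp (Equiv.ofBijective point point_bijective)]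
  simp only [Equiv.ofBijective_apply, chi_point]
  revert i j
  decide

theorem seven_le_finrank_span_chi : 7 ≤ finrank (ZMod 3) (span (ZMod 3) (Set.range chi)) := by
  -- the incidence matrix of these lines and points is lower unitriangular
  let lines : Fin 7 → Fin 13 := ![0, 1, 3, 4, 2, 6, 9]
  let points : Fin 7 → Fin 13 := ![9, 2, 6, 4, 1, 3, 0]
  have hdet : (Matrix.of fun i j => chi (point (lines i)) (point (points j))).det ≠ 0 := by
    rw [Matrix.det_of_isLowerTriangular]
    · simp only [Matrix.of_apply, chi_point]
      decide
    · intro i j hij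
      simp only [Matrix.of_apply, chi_point]
      revert i j
      decide
  have hind := linearIndependent_of_det_ne_zero (point ∘ points) hdet
  calc 7 = finrank (ZMod 3) (span (ZMod 3) (Set.range fun i => chi (point (lines i)))) := by
        rw [finrank_span_eq_card hind, Fintype.card_fin]
    _ ≤ _ := finrank_mono (span_mono (Set.range_comp_subset_range _ chi))

/-- `C` is self-orthogonal of dimension 6, so `C^⊥` has dimension 7, and `C^⊥` is
spanned by the characteristic functions of the lines. -/
theorem stmt14 :
    (∀ x ∈ Cdiff, ∀ y ∈ Cdiff, dotP x y = 0) ∧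
    Module.finrank (ZMod 3) Cdiff = 6 ∧
    Module.finrank (ZMod 3) CdiffPerp = 7 ∧
    CdiffPerp = Submodule.span (ZMod 3) {v | ∃ ℓ : P2F3, v = chi ℓ} := by
  let B : LinearMap.BilinForm (ZMod 3) (P2F3 → ZMod 3) := dotProductBilin _ _
  have hB : ∀ ℓ m, B (chi ℓ) (chi m) = 1 := dotP_chi_chi
  have hperp : CdiffPerp = B.orthogonal Cdiff := Submodule.ext fun _ => Iff.rfl
  have hSpanPerp : span (ZMod 3) (Set.range chi) ≤ CdiffPerp :=
    hperp ▸ LinearMap.BilinForm.span_range_le_orthogonal_span_sub hB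
  have hSpan : finrank (ZMod 3) Cdiff + 1 = finrank (ZMod 3) (span (ZMod 3) (Set.range chi)) :=
    LinearMap.BilinForm.finrank_span_sub_add_one hB one_ne_zero (point 0)
  have hPerp : finrank (ZMod 3) CdiffPerp = 13 - finrank (ZMod 3) Cdiff := by
    rw [hperp, LinearMap.BilinForm.finrank_orthogonal (nondegenerate_dotProductBilin _ _),
      finrank_fintype_fun_eq_card, card_eq]
  have hSpanLe := finrank_mono hSpanPerp
  have hSpanGe := seven_le_finrank_span_chi
  have hC : finrank (ZMod 3) Cdiff = 6 := by omega
  refine ⟨fun x hx y hy => hSpanPerp (span_sub_le_span_range chi hy) x hx, hC, by omega, ?_⟩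
  have hrange : Set.range chi = {v | ∃ ℓ : P2F3, v = chi ℓ} := by ext; simp [eq_comm]
  exact hrange ▸ (eq_of_le_of_finrank_le hSpanPerp (by omega)).symm
end
end
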